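/- arXiv:0805.1561 — 11 statements merged into one kernel-verified Lean document; each statement's English description precedes it below -/
import Mathlib

section
/- For all real numbers λ and t with t ≠ 0, and every real μ ≠ λ, exp(−μt)·((μ−λ)t + 1 − exp((μ−λ)t))/(μ−λ)² < 0; that is, the derivative of μ ↦ f_λ(μ, t) with respect to μ is strictly negative at every μ ≠ λ. -/
open Real

/-- For all real `λ` and `t ≠ 0`, and every `μ ≠ λ`,
`exp (-μ*t) * ((μ-λ)*t + 1 - exp ((μ-λ)*t)) / (μ-λ)^2 < 0`;
i.e. the derivative of `μ ↦ f_λ(μ, t)` is strictly negative at every `μ ≠ λ`. -/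
theorem stmt_2 (l t μ : ℝ) (ht : t ≠ 0) (hμ : μ ≠ l) :
    Real.exp (-μ * t) * ((μ - l) * t + 1 - Real.exp ((μ - l) * t)) / (μ - l) ^ 2 < 0 := by
  have hx : (μ - l) * t ≠ 0 := mul_ne_zero (sub_ne_zero.mpr hμ) ht
  have h1 : (μ - l) * t + 1 < Real.exp ((μ - l) * t) := Real.add_one_lt_exp hx
  have h2 : Real.exp (-μ * t) * ((μ - l) * t + 1 - Real.exp ((μ - l) * t)) < 0 :=
    mul_neg_of_pos_of_neg (Real.exp_pos _) (by linarith)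
  exact div_neg_of_neg_of_pos h2 (by have h := sub_ne_zero.mpr hμ; positivity)
end

section
/- (Corollary 1.) For all real numbers λ and t, the extended function μ ↦ f_λ(μ, t) is monotonically decreasing (antitone) on ℝ, and if t ≠ 0 it is strictly decreasing on ℝ. -/
open Real Set

/- For `μ ≠ λ`, `f_λ(μ, t)` is minus the slope of the secant of `g μ = exp (-μ t)` between `λ`
and `μ`, and the alpha function at `μ = λ` is minus `g' λ`. A strictly convex differentiable
function has strictly increasing secant slopes from a fixed point, with the derivative at that
point filling the gap, so `f_λ(·, t)` is strictly decreasing when `t ≠ 0`; for `t = 0` it is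
identically zero. -/

theorem StrictConvexOn.strictMonoOn_update_slope {S : Set ℝ} {g : ℝ → ℝ} {l d : ℝ}
    (hg : StrictConvexOn ℝ S g) (hl : l ∈ S) (hd : HasDerivAt g d l) :
    StrictMonoOn (Function.update (slope g l) l d) S := by
  intro a ha b hb hab
  simp only [Function.update_apply]
  by_cases hal : a = l
  · subst hal
    rw [if_neg hab.ne', if_pos rfl]
    exact hg.lt_slope_of_hasDerivAt ha hb hab hd
  · by_cases hbl : b = l
    · subst hbl
      rw [if_neg hal, if_pos rfl, slope_comm]
      exact hg.slope_lt_of_hasDerivAt ha hb hab hd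
    · rw [if_neg hal, if_neg hbl, slope_def_field, slope_def_field]
      exact hg.secant_strict_mono hl ha hb hal hbl hab

theorem strictConvexOn_exp_neg_mul {t : ℝ} (ht : t ≠ 0) :
    StrictConvexOn ℝ univ (fun μ : ℝ => exp (-μ * t)) := by
  refine ⟨convex_univ, fun x _ y _ hxy a b ha hb hab => ?_⟩
  have hne : -x * t ≠ -y * t := by
    rwa [Ne, mul_left_inj' ht, neg_inj]
  convert strictConvexOn_exp.2 (mem_univ _) (mem_univ _) hne ha hb hab using 2
  simp only [smul_eq_mul]
  ring

theorem hasDerivAt_exp_neg_mul (t x : ℝ) :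
    HasDerivAt (fun μ : ℝ => exp (-μ * t)) (-t * exp (-x * t)) x := by
  simpa [mul_comm] using ((hasDerivAt_id x).neg.mul_const t).exp

theorem alphaExtension_eq_neg_update_slope (l t : ℝ) :
    (fun μ : ℝ =>
      if μ = l then t * exp (-l * t) else (exp (-l * t) - exp (-μ * t)) / (μ - l)) =
    fun μ => -Function.update (slope (fun μ : ℝ => exp (-μ * t)) l) l (-t * exp (-l * t)) μ := by
  funext μ
  rw [Function.update_apply]
  split_ifs with h
  · ring
  · rw [slope_def_field, ← neg_div, neg_sub]

/-- Corollary 1: For all real `λ` and `t`, the extended function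
`μ ↦ f_λ(μ, t)` (equal to `(exp (-λ*t) - exp (-μ*t))/(μ - λ)` for `μ ≠ λ` and to the
alpha function `t * exp (-λ*t)` at `μ = λ`) is antitone on `ℝ`, and strictly
decreasing on `ℝ` when `t ≠ 0`. -/
theorem stmt_4 (l t : ℝ) :
    Antitone (fun μ : ℝ =>
      if μ = l then t * Real.exp (-l * t)
      else (Real.exp (-l * t) - Real.exp (-μ * t)) / (μ - l)) ∧
    (t ≠ 0 → StrictAnti (fun μ : ℝ =>
      if μ = l then t * Real.exp (-l * t)
      else (Real.exp (-l * t) - Real.exp (-μ * t)) / (μ - l))) := by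
  have hstrict (ht : t ≠ 0) : StrictAnti (fun μ : ℝ =>
      if μ = l then t * exp (-l * t) else (exp (-l * t) - exp (-μ * t)) / (μ - l)) := by
    rw [alphaExtension_eq_neg_update_slope]
    exact (strictMonoOn_univ.mp <| (strictConvexOn_exp_neg_mul ht).strictMonoOn_update_slope
      (mem_univ l) (hasDerivAt_exp_neg_mul t l)).neg
  refine ⟨?_, hstrict⟩
  rcases eq_or_ne t 0 with rfl | ht
  · have hzero : (fun μ : ℝ => if μ = l then 0 * exp (-l * 0)
        else (exp (-l * 0) - exp (-μ * 0)) / (μ - l)) = fun _ => 0 := by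
      funext μ
      split_ifs <;> simp
    rw [hzero]
    exact antitone_const
  · exact (hstrict ht).antitone
end

section
/- (Generalized Carnevale–Hines Lemma.) For all real numbers λ, μ₁, μ₂ with μ₂ > μ₁, μ₁ ≠ λ and μ₂ ≠ λ, and for every real t, one has (exp(−λt) − exp(−μ₁t))/(μ₁ − λ) ≥ (exp(−λt) − exp(−μ₂t))/(μ₂ − λ). -/
/-
For fixed `t` the map `μ ↦ exp (-μ * t)` is convex, and `f_λ(μ, t)` is minus the slope of its
secant from `λ` to `μ`; secant slopes of a convex function from a fixed point increase with the
other endpoint.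
-/

lemma convexOn_exp_neg_mul (t : ℝ) : ConvexOn ℝ Set.univ fun μ : ℝ => Real.exp (-μ * t) := by
  refine ⟨convex_univ, fun x _ y _ a b ha hb hab => ?_⟩
  have hexp := convexOn_exp.2 (Set.mem_univ (-x * t)) (Set.mem_univ (-y * t)) ha hb hab
  simp only [smul_eq_mul] at hexp ⊢
  convert hexp using 2
  ring

/-- Generalized Carnevale–Hines Lemma: If `μ₂ > μ₁`, `μ₁ ≠ λ` and
`μ₂ ≠ λ`, then for every real `t`,
`(exp (-λ*t) - exp (-μ₁*t))/(μ₁ - λ) ≥ (exp (-λ*t) - exp (-μ₂*t))/(μ₂ - λ)`. -/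
theorem stmt_5 (l μ₁ μ₂ : ℝ) (h : μ₁ < μ₂) (h1 : μ₁ ≠ l) (h2 : μ₂ ≠ l) (t : ℝ) :
    (Real.exp (-l * t) - Real.exp (-μ₁ * t)) / (μ₁ - l) ≥
      (Real.exp (-l * t) - Real.exp (-μ₂ * t)) / (μ₂ - l) := by
  have hslope := (convexOn_exp_neg_mul t).secant_mono (Set.mem_univ l) (Set.mem_univ μ₁)
    (Set.mem_univ μ₂) h1 h2 h.le
  rw [ge_iff_le, ← neg_sub, neg_div, ← neg_sub (Real.exp (-μ₁ * t)), neg_div]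
  exact neg_le_neg hslope
end

section
/- For all real numbers λ, μ₁, μ₂ with μ₂ > μ₁, μ₁ ≠ λ and μ₂ ≠ λ, and for every real t ≠ 0, the strict inequality (exp(−λt) − exp(−μ₁t))/(μ₁ − λ) > (exp(−λt) − exp(−μ₂t))/(μ₂ − λ) holds, with equality at t = 0. -/
/-!
For `t ≠ 0`, `(exp (-λ t) - exp (-μ t)) / (μ - λ)` is minus the slope of the secant through `λ` and
`μ` of the strictly convex function `μ ↦ exp (-μ t)`, and such slopes strictly increase in `μ`.
-/

open Real

theorem strictConvexOn_exp_mul_left {c : ℝ} (hc : c ≠ 0) :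
    StrictConvexOn ℝ Set.univ fun x => exp (c * x) := by
  refine ⟨convex_univ, fun x _ y _ hxy a b ha hb hab => ?_⟩
  have hcxy : c * x ≠ c * y := (mul_right_injective₀ hc).ne hxy
  calc exp (c * (a • x + b • y)) = exp (a • (c * x) + b • (c * y)) := by
        simp only [smul_eq_mul]; ring_nf
    _ < a • exp (c * x) + b • exp (c * y) :=
        strictConvexOn_exp.2 (Set.mem_univ _) (Set.mem_univ _) hcxy ha hb hab

theorem exp_sub_exp_div_sub_lt_of_lt {l μ₁ μ₂ t : ℝ} (h : μ₁ < μ₂) (h1 : μ₁ ≠ l) (h2 : μ₂ ≠ l)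
    (ht : t ≠ 0) :
    (exp (-l * t) - exp (-μ₂ * t)) / (μ₂ - l) < (exp (-l * t) - exp (-μ₁ * t)) / (μ₁ - l) := by
  have hslope := (strictConvexOn_exp_mul_left (neg_ne_zero.2 ht)).secant_strict_mono
    (Set.mem_univ l) (Set.mem_univ μ₁) (Set.mem_univ μ₂) h1 h2 h
  rw [← neg_sub, neg_div, ← neg_sub (exp (-μ₁ * t)), neg_div, neg_lt_neg_iff]
  simpa only [mul_neg, neg_mul, mul_comm t] using hslope

/-- If `μ₂ > μ₁`, `μ₁ ≠ λ` and `μ₂ ≠ λ`, then for every real `t ≠ 0` the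
strict inequality `(exp (-λ*t) - exp (-μ₁*t))/(μ₁-λ) > (exp (-λ*t) - exp (-μ₂*t))/(μ₂-λ)`
holds, with equality at `t = 0`. -/
theorem stmt_6 (l μ₁ μ₂ : ℝ) (h : μ₁ < μ₂) (h1 : μ₁ ≠ l) (h2 : μ₂ ≠ l) :
    (∀ t : ℝ, t ≠ 0 →
      (Real.exp (-l * t) - Real.exp (-μ₁ * t)) / (μ₁ - l) >
        (Real.exp (-l * t) - Real.exp (-μ₂ * t)) / (μ₂ - l)) ∧
    (Real.exp (-l * 0) - Real.exp (-μ₁ * 0)) / (μ₁ - l) =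
      (Real.exp (-l * 0) - Real.exp (-μ₂ * 0)) / (μ₂ - l) :=
  ⟨fun _ ht => exp_sub_exp_div_sub_lt_of_lt h h1 h2 ht, by simp⟩
end

section
/- For all real numbers k_m, k_i, k_j with 0 < k_m < k_i < k_j, and every real t > 0, one has exp(−k_m t) − exp(−k_i t) − ((k_i − k_m)/(k_j − k_m))·(exp(−k_m t) − exp(−k_j t)) > 0, with equality to 0 at t = 0. -/
open Real

/- Since `ki = (1 - θ) km + θ kj` with `θ = (ki - km) / (kj - km) ∈ (0, 1)`, the expression equals
`(1 - θ) exp (-km t) + θ exp (-kj t) - exp (-ki t)`, the gap in the strict convexity of `exp`. -/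
theorem stmt_9_general (km ki kj : ℝ) (hmi : km < ki) (hij : ki < kj) :
    (∀ t : ℝ, 0 < t →
      Real.exp (-km * t) - Real.exp (-ki * t) -
        ((ki - km) / (kj - km)) * (Real.exp (-km * t) - Real.exp (-kj * t)) > 0) ∧
    Real.exp (-km * 0) - Real.exp (-ki * 0) -
      ((ki - km) / (kj - km)) * (Real.exp (-km * 0) - Real.exp (-kj * 0)) = 0 := by
  refine ⟨fun t ht => ?_, by simp⟩
  set θ := (ki - km) / (kj - km) with hθ
  have hθ_pos : 0 < θ := div_pos (by linarith) (by linarith)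
  have hθ_lt_one : θ < 1 := (div_lt_one (by linarith)).2 (by linarith)
  have hki : (1 - θ) • (-km * t) + θ • (-kj * t) = -ki * t := by
    rw [smul_eq_mul, smul_eq_mul, hθ]
    field_simp [(by linarith : kj - km ≠ 0)]
    ring
  have hconv := strictConvexOn_exp.2 (Set.mem_univ (-km * t)) (Set.mem_univ (-kj * t))
    (by nlinarith) (sub_pos.2 hθ_lt_one) hθ_pos (sub_add_cancel 1 θ)
  rw [hki, smul_eq_mul, smul_eq_mul] at hconv
  linear_combination hconv

/-- For all real rates `0 < k_m < k_i < k_j` and every real `t > 0`,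
`exp (-k_m*t) - exp (-k_i*t) - ((k_i - k_m)/(k_j - k_m)) * (exp (-k_m*t) - exp (-k_j*t)) > 0`,
with equality to `0` at `t = 0`. -/
theorem stmt_9 (km ki kj : ℝ) (hm : 0 < km) (hmi : km < ki) (hij : ki < kj) :
    (∀ t : ℝ, 0 < t →
      Real.exp (-km * t) - Real.exp (-ki * t) -
        ((ki - km) / (kj - km)) * (Real.exp (-km * t) - Real.exp (-kj * t)) > 0) ∧
    Real.exp (-km * 0) - Real.exp (-ki * 0) -
      ((ki - km) / (kj - km)) * (Real.exp (-km * 0) - Real.exp (-kj * 0)) = 0 :=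
  stmt_9_general km ki kj hmi hij
end

section
/- In the model setup, for every μ ∈ M and every t ≥ t_0, writing Δ = t − t_0, each inhibitory-growth summand of m(t) is non-positive: j_0(μ)·b_i(μ)·b_j(μ)·[(exp(−k_m Δ) − exp(−k_i(μ)Δ)) − ((k_i(μ) − k_m)/(k_j(μ) − k_m))·(exp(−k_m Δ) − exp(−k_j(μ)Δ))] ≤ 0. -/
open Real

/-- In the model setup, for every inhibitory synapse type μ and every
t ≥ t₀, each inhibitory-growth summand of m(t) is non-positive. -/
theorem stmt_11
    (t0 m0 km : ℝ) (hkm : 0 < km)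
    {N M : Type} [Fintype N] [Fintype M]
    (ke ae e0 : N → ℝ)
    (ki kj ai aj i0 j0 : M → ℝ)
    (hke : ∀ ν, 0 < ke ν) (hkem : ∀ ν, ke ν ≠ km)
    (hae : ∀ ν, 0 < ae ν) (he0 : ∀ ν, 0 ≤ e0 ν)
    (hki : ∀ μ, 0 < ki μ) (hkij : ∀ μ, ki μ < kj μ)
    (hkim : ∀ μ, ki μ ≠ km) (hkjm : ∀ μ, kj μ ≠ km)
    (hai : ∀ μ, 0 < ai μ) (haj : ∀ μ, 0 < aj μ)
    (hi0 : ∀ μ, i0 μ ≤ 0) (hj0 : ∀ μ, j0 μ ≤ 0)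
    (m : ℝ → ℝ)
    (hm : ∀ t : ℝ, m t =
      m0 * Real.exp (-km * (t - t0))
      + ∑ ν, e0 ν * (ae ν / (ke ν - km)) *
          (Real.exp (-km * (t - t0)) - Real.exp (-ke ν * (t - t0)))
      + ∑ μ, i0 μ * (ai μ / (ki μ - km)) *
          (Real.exp (-km * (t - t0)) - Real.exp (-ki μ * (t - t0)))
      + ∑ μ, j0 μ * (ai μ / (ki μ - km)) * (aj μ / (kj μ - ki μ)) *
          ((Real.exp (-km * (t - t0)) - Real.exp (-ki μ * (t - t0)))
            - ((ki μ - km) / (kj μ - km)) *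
              (Real.exp (-km * (t - t0)) - Real.exp (-kj μ * (t - t0)))))
    (μ : M) (t : ℝ) (ht : t0 ≤ t) :
    j0 μ * (ai μ / (ki μ - km)) * (aj μ / (kj μ - ki μ)) *
        ((Real.exp (-km * (t - t0)) - Real.exp (-ki μ * (t - t0)))
          - ((ki μ - km) / (kj μ - km)) *
            (Real.exp (-km * (t - t0)) - Real.exp (-kj μ * (t - t0)))) ≤ 0 := by
  set d := t - t0 with hd
  have hd0 : 0 ≤ d := by simp [hd]; linarith
  have hconv : ConvexOn ℝ Set.univ (fun x : ℝ => Real.exp (-x * d)) := by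
    refine ⟨convex_univ, ?_⟩
    intro x _ y _ a b ha hb hab
    have h := convexOn_exp.2 (Set.mem_univ (-x * d)) (Set.mem_univ (-y * d)) ha hb hab
    simp only [smul_eq_mul] at h ⊢
    have h2 : -(a * x + b * y) * d = a * (-x * d) + b * (-y * d) := by ring
    rw [h2]
    exact h
  have hsec := hconv.secant_mono (a := km) (x := ki μ) (y := kj μ)
    (Set.mem_univ _) (Set.mem_univ _) (Set.mem_univ _) (hkim μ) (hkjm μ) (le_of_lt (hkij μ))
  have e1 := neg_le_neg hsec
  rw [← neg_div, ← neg_div, neg_sub, neg_sub] at e1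
  have hbr : 0 ≤ (Real.exp (-km * d) - Real.exp (-ki μ * d)) / (ki μ - km)
      - (Real.exp (-km * d) - Real.exp (-kj μ * d)) / (kj μ - km) := by linarith
  have hki' : ki μ - km ≠ 0 := sub_ne_zero.mpr (hkim μ)
  have hkj' : kj μ - km ≠ 0 := sub_ne_zero.mpr (hkjm μ)
  have key : ai μ / (ki μ - km) *
      ((Real.exp (-km * d) - Real.exp (-ki μ * d))
        - (ki μ - km) / (kj μ - km) * (Real.exp (-km * d) - Real.exp (-kj μ * d)))
      = ai μ * ((Real.exp (-km * d) - Real.exp (-ki μ * d)) / (ki μ - km)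
        - (Real.exp (-km * d) - Real.exp (-kj μ * d)) / (kj μ - km)) := by
    field_simp
  have hkj_ki : 0 < kj μ - ki μ := sub_pos.mpr (hkij μ)
  have hpos : 0 ≤ aj μ / (kj μ - ki μ) *
      (ai μ * ((Real.exp (-km * d) - Real.exp (-ki μ * d)) / (ki μ - km)
        - (Real.exp (-km * d) - Real.exp (-kj μ * d)) / (kj μ - km))) :=
    mul_nonneg (div_nonneg (haj μ).le hkj_ki.le) (mul_nonneg (hai μ).le hbr)
  calc j0 μ * (ai μ / (ki μ - km)) * (aj μ / (kj μ - ki μ)) *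
        ((Real.exp (-km * d) - Real.exp (-ki μ * d))
          - (ki μ - km) / (kj μ - km) * (Real.exp (-km * d) - Real.exp (-kj μ * d)))
      = j0 μ * (aj μ / (kj μ - ki μ) *
          (ai μ / (ki μ - km) *
            ((Real.exp (-km * d) - Real.exp (-ki μ * d))
              - (ki μ - km) / (kj μ - km) * (Real.exp (-km * d) - Real.exp (-kj μ * d))))) := by
        ring
    _ = j0 μ * (aj μ / (kj μ - ki μ) *
          (ai μ * ((Real.exp (-km * d) - Real.exp (-ki μ * d)) / (ki μ - km)
            - (Real.exp (-km * d) - Real.exp (-kj μ * d)) / (kj μ - km)))) := by rw [key]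
    _ ≤ 0 := mul_nonpos_of_nonpos_of_nonneg (hj0 μ) hpos
end

section
/- In the model setup, assume additionally that N is nonempty and that every excitatory current decays at least as fast as every inhibitory current, i.e. k_e(ν) ≥ k_i(μ) for all ν ∈ N and μ ∈ M. Let ν' ∈ N attain the minimum of k_e over N. Then for every t ≥ t_0, writing Δ = t − t_0, m(t) ≤ m_0·exp(−k_m Δ) + (Σ_{ν∈N} a_e(ν) e_0(ν) + Σ_{μ∈M} a_i(μ) i_0(μ))·(exp(−k_m Δ) − exp(−k_e(ν')Δ))/(k_e(ν') − k_m). -/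
open Real

private lemma F_integral' (km k Δ : ℝ) (h : k ≠ km) :
    (Real.exp (-km*Δ) - Real.exp (-k*Δ))/(k - km)
      = ∫ s in (0:ℝ)..Δ, Real.exp (-km*Δ + (km - k)*s) := by
  have hb : km - k ≠ 0 := sub_ne_zero.mpr (Ne.symm h)
  have hderiv : ∀ s : ℝ, HasDerivAt (fun s => Real.exp (-km*Δ + (km - k)*s)/(km - k))
      (Real.exp (-km*Δ + (km - k)*s)) s := by
    intro s
    have h1 : HasDerivAt (fun s : ℝ => -km*Δ + (km - k)*s) (km - k) s := by
      simpa using ((hasDerivAt_id s).const_mul (km - k)).const_add (-km*Δ)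
    have h3 := h1.exp.div_const (km - k)
    simpa [mul_div_cancel_right₀ _ hb] using h3
  have hcont : Continuous fun s : ℝ => Real.exp (-km*Δ + (km-k)*s) := by continuity
  rw [intervalIntegral.integral_eq_sub_of_hasDerivAt (fun s _ => hderiv s)
    (hcont.intervalIntegrable 0 Δ)]
  have h2 : -km*Δ + (km-k)*Δ = -k*Δ := by ring
  rw [h2, mul_zero, add_zero, div_sub_div_same, ← neg_div_neg_eq]
  congr 1 <;> ring

/-- In the model setup, if every excitatory current decays at least as
fast as every inhibitory current and ν' attains the minimum of k_e over N, then m(t) is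
bounded above by the expression built from the slowest excitatory rate, for t ≥ t₀. -/
theorem stmt_13
    (t0 m0 km : ℝ) (hkm : 0 < km)
    {N M : Type} [Fintype N] [Fintype M]
    (ke ae e0 : N → ℝ)
    (ki kj ai aj i0 j0 : M → ℝ)
    (hke : ∀ ν, 0 < ke ν) (hkem : ∀ ν, ke ν ≠ km)
    (hae : ∀ ν, 0 < ae ν) (he0 : ∀ ν, 0 ≤ e0 ν)
    (hki : ∀ μ, 0 < ki μ) (hkij : ∀ μ, ki μ < kj μ)
    (hkim : ∀ μ, ki μ ≠ km) (hkjm : ∀ μ, kj μ ≠ km)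
    (hai : ∀ μ, 0 < ai μ) (haj : ∀ μ, 0 < aj μ)
    (hi0 : ∀ μ, i0 μ ≤ 0) (hj0 : ∀ μ, j0 μ ≤ 0)
    (m : ℝ → ℝ)
    (hm : ∀ t : ℝ, m t =
      m0 * Real.exp (-km * (t - t0))
      + ∑ ν, e0 ν * (ae ν / (ke ν - km)) *
          (Real.exp (-km * (t - t0)) - Real.exp (-ke ν * (t - t0)))
      + ∑ μ, i0 μ * (ai μ / (ki μ - km)) *
          (Real.exp (-km * (t - t0)) - Real.exp (-ki μ * (t - t0)))
      + ∑ μ, j0 μ * (ai μ / (ki μ - km)) * (aj μ / (kj μ - ki μ)) *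
          ((Real.exp (-km * (t - t0)) - Real.exp (-ki μ * (t - t0)))
            - ((ki μ - km) / (kj μ - km)) *
              (Real.exp (-km * (t - t0)) - Real.exp (-kj μ * (t - t0)))))
    (hei : ∀ (ν : N) (μ : M), ki μ ≤ ke ν)
    (ν' : N) (hν' : ∀ ν, ke ν' ≤ ke ν)
    (t : ℝ) (ht : t0 ≤ t) :
    m t ≤
      m0 * Real.exp (-km * (t - t0))
      + (∑ ν, ae ν * e0 ν + ∑ μ, ai μ * i0 μ) *
          (Real.exp (-km * (t - t0)) - Real.exp (-ke ν' * (t - t0))) / (ke ν' - km) := by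
  rw [hm t]
  have hΔ : (0:ℝ) ≤ t - t0 := sub_nonneg.mpr ht
  set Δ := t - t0 with hΔdef
  set F : ℝ → ℝ := fun k => (Real.exp (-km*Δ) - Real.exp (-k*Δ))/(k - km) with hFdef
  have hFint : ∀ k, k ≠ km → F k = ∫ s in (0:ℝ)..Δ, Real.exp (-km*Δ + (km - k)*s) :=
    fun k h => F_integral' km k Δ h
  have hFnonneg : ∀ k, k ≠ km → 0 ≤ F k := by
    intro k h; rw [hFint k h]
    exact intervalIntegral.integral_nonneg hΔ (fun s _ => (Real.exp_pos _).le)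
  have hFmono : ∀ k1 k2 : ℝ, k1 ≠ km → k2 ≠ km → k1 ≤ k2 → F k2 ≤ F k1 := by
    intro k1 k2 h1 h2 h12
    rw [hFint _ h1, hFint _ h2]
    apply intervalIntegral.integral_mono_on hΔ
      ((by continuity : Continuous fun s : ℝ => Real.exp (-km*Δ + (km-k2)*s)).intervalIntegrable 0 Δ)
      ((by continuity : Continuous fun s : ℝ => Real.exp (-km*Δ + (km-k1)*s)).intervalIntegrable 0 Δ)
    intro s hs
    apply Real.exp_le_exp.mpr
    have : (km - k2)*s ≤ (km - k1)*s :=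
      mul_le_mul_of_nonneg_right (by linarith) hs.1
    linarith
  -- rewrite the three sums in terms of F
  have he : ∀ ν : N, e0 ν * (ae ν / (ke ν - km)) * (Real.exp (-km*Δ) - Real.exp (-ke ν*Δ))
      = (ae ν * e0 ν) * F (ke ν) := by
    intro ν
    simp only [hFdef]
    ring
  have hi : ∀ μ : M, i0 μ * (ai μ / (ki μ - km)) * (Real.exp (-km*Δ) - Real.exp (-ki μ*Δ))
      = (ai μ * i0 μ) * F (ki μ) := by
    intro μ
    simp only [hFdef]
    ring
  have hjj : ∀ μ : M, j0 μ * (ai μ / (ki μ - km)) * (aj μ / (kj μ - ki μ)) *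
      ((Real.exp (-km*Δ) - Real.exp (-ki μ*Δ))
        - ((ki μ - km) / (kj μ - km)) * (Real.exp (-km*Δ) - Real.exp (-kj μ*Δ)))
      = j0 μ * ((ai μ * aj μ / (kj μ - ki μ)) * (F (ki μ) - F (kj μ))) := by
    intro μ
    have h1 := sub_ne_zero.mpr (hkim μ)
    have h2 := sub_ne_zero.mpr (hkjm μ)
    have h3 : kj μ - ki μ ≠ 0 := sub_ne_zero.mpr (hkij μ).ne'
    simp only [hFdef]
    field_simp
  rw [Finset.sum_congr rfl (fun ν _ => he ν), Finset.sum_congr rfl (fun μ _ => hi μ),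
    Finset.sum_congr rfl (fun μ _ => hjj μ)]
  -- bound each sum
  have hS1 : ∑ ν, (ae ν * e0 ν) * F (ke ν) ≤ (∑ ν, ae ν * e0 ν) * F (ke ν') := by
    rw [Finset.sum_mul]
    refine Finset.sum_le_sum fun ν _ => ?_
    exact mul_le_mul_of_nonneg_left (hFmono _ _ (hkem ν') (hkem ν) (hν' ν))
      (mul_nonneg (hae ν).le (he0 ν))
  have hS2 : ∑ μ, (ai μ * i0 μ) * F (ki μ) ≤ (∑ μ, ai μ * i0 μ) * F (ke ν') := by
    rw [Finset.sum_mul]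
    refine Finset.sum_le_sum fun μ _ => ?_
    exact mul_le_mul_of_nonpos_left (hFmono _ _ (hkim μ) (hkem ν') (hei ν' μ))
      (mul_nonpos_of_nonneg_of_nonpos (hai μ).le (hi0 μ))
  have hS3 : ∑ μ, j0 μ * ((ai μ * aj μ / (kj μ - ki μ)) * (F (ki μ) - F (kj μ))) ≤ 0 := by
    refine Finset.sum_nonpos fun μ _ => ?_
    have hpos : 0 ≤ (ai μ * aj μ / (kj μ - ki μ)) * (F (ki μ) - F (kj μ)) := by
      have h1 : 0 ≤ F (ki μ) - F (kj μ) :=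
        sub_nonneg.mpr (hFmono _ _ (hkim μ) (hkjm μ) (hkij μ).le)
      have h2 : 0 < kj μ - ki μ := sub_pos.mpr (hkij μ)
      exact mul_nonneg (div_nonneg (mul_nonneg (hai μ).le (haj μ).le) h2.le) h1
    exact mul_nonpos_of_nonpos_of_nonneg (hj0 μ) hpos
  have hRHS : (∑ ν, ae ν * e0 ν + ∑ μ, ai μ * i0 μ) *
      (Real.exp (-km * Δ) - Real.exp (-ke ν' * Δ)) / (ke ν' - km)
      = (∑ ν, ae ν * e0 ν) * F (ke ν') + (∑ μ, ai μ * i0 μ) * F (ke ν') := by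
    simp only [hFdef]
    ring
  rw [hRHS]
  linarith
end

section
/- (No threshold crossing when moving away from threshold.) In the model setup, assume N is nonempty, k_e(ν) ≥ k_i(μ) for all ν ∈ N and μ ∈ M, m_0 < 1, and m'_0 ≤ 0. Then the membrane potential stays below threshold for all later times: m(t) < 1 for every t ≥ t_0. -/
open Real MeasureTheory intervalIntegral

noncomputable def phiAux (km Δ k : ℝ) : ℝ :=
  ∫ s in (0:ℝ)..Δ, Real.exp (-km*(Δ-s)) * Real.exp (-k*s)

lemma exp_int (c Δ : ℝ) (hc : c ≠ 0) :
    ∫ s in (0:ℝ)..Δ, Real.exp (c*s) = (Real.exp (c*Δ) - 1)/c := by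
  rw [intervalIntegral.integral_comp_mul_left Real.exp hc, integral_exp]
  simp [smul_eq_mul]
  ring

lemma phiAux_eq (km Δ k : ℝ) (h : k ≠ km) :
    phiAux km Δ k = (Real.exp (-km*Δ) - Real.exp (-k*Δ))/(k - km) := by
  have h1 : ∀ s : ℝ, Real.exp (-km*(Δ-s)) * Real.exp (-k*s)
      = Real.exp (-km*Δ) * Real.exp ((km-k)*s) := by
    intro s; rw [← Real.exp_add, ← Real.exp_add]; ring_nf
  unfold phiAux
  simp_rw [h1]
  rw [intervalIntegral.integral_const_mul, exp_int _ _ (sub_ne_zero.2 (Ne.symm h))]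
  have h2 : Real.exp (-km*Δ) * Real.exp ((km-k)*Δ) = Real.exp (-k*Δ) := by
    rw [← Real.exp_add]; ring_nf
  have hkm : k - km ≠ 0 := sub_ne_zero.2 h
  have hmk : km - k ≠ 0 := sub_ne_zero.2 (Ne.symm h)
  have h3 : Real.exp (-km*Δ) * ((Real.exp ((km-k)*Δ) - 1)/(km-k))
      = (Real.exp (-km*Δ)*Real.exp ((km-k)*Δ) - Real.exp (-km*Δ))/(km-k) := by ring
  rw [h3, h2, div_eq_div_iff hmk hkm]
  ring

lemma phiAux_integrable (km Δ k : ℝ) :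
    IntervalIntegrable (fun s => Real.exp (-km*(Δ-s)) * Real.exp (-k*s)) volume 0 Δ :=
  (Continuous.mul (by continuity) (by continuity)).intervalIntegrable _ _

lemma phiAux_nonneg (km Δ k : ℝ) (hΔ : 0 ≤ Δ) : 0 ≤ phiAux km Δ k :=
  intervalIntegral.integral_nonneg hΔ (fun s _ => by positivity)

lemma phiAux_mono (km Δ : ℝ) (hΔ : 0 ≤ Δ) {k1 k2 : ℝ} (h : k1 ≤ k2) :
    phiAux km Δ k2 ≤ phiAux km Δ k1 := by
  refine intervalIntegral.integral_mono_on hΔ (phiAux_integrable _ _ _)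
    (phiAux_integrable _ _ _) (fun s hs => ?_)
  have := hs.1
  exact mul_le_mul_of_nonneg_left (Real.exp_le_exp.2 (by nlinarith)) (Real.exp_pos _).le


set_option maxHeartbeats 1000000 in
/-- No threshold crossing when moving away from threshold: In the model
setup, if N is nonempty, every excitatory current decays at least as fast as every
inhibitory current, m₀ < 1 and m'₀ ≤ 0, then m(t) < 1 for every t ≥ t₀. -/
theorem stmt_14
    (t0 m0 km : ℝ) (hkm : 0 < km)
    {N M : Type} [Fintype N] [Fintype M]
    (ke ae e0 : N → ℝ)
    (ki kj ai aj i0 j0 : M → ℝ)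
    (hke : ∀ ν, 0 < ke ν) (hkem : ∀ ν, ke ν ≠ km)
    (hae : ∀ ν, 0 < ae ν) (he0 : ∀ ν, 0 ≤ e0 ν)
    (hki : ∀ μ, 0 < ki μ) (hkij : ∀ μ, ki μ < kj μ)
    (hkim : ∀ μ, ki μ ≠ km) (hkjm : ∀ μ, kj μ ≠ km)
    (hai : ∀ μ, 0 < ai μ) (haj : ∀ μ, 0 < aj μ)
    (hi0 : ∀ μ, i0 μ ≤ 0) (hj0 : ∀ μ, j0 μ ≤ 0)
    (m : ℝ → ℝ)
    (hm : ∀ t : ℝ, m t =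
      m0 * Real.exp (-km * (t - t0))
      + ∑ ν, e0 ν * (ae ν / (ke ν - km)) *
          (Real.exp (-km * (t - t0)) - Real.exp (-ke ν * (t - t0)))
      + ∑ μ, i0 μ * (ai μ / (ki μ - km)) *
          (Real.exp (-km * (t - t0)) - Real.exp (-ki μ * (t - t0)))
      + ∑ μ, j0 μ * (ai μ / (ki μ - km)) * (aj μ / (kj μ - ki μ)) *
          ((Real.exp (-km * (t - t0)) - Real.exp (-ki μ * (t - t0)))
            - ((ki μ - km) / (kj μ - km)) *
              (Real.exp (-km * (t - t0)) - Real.exp (-kj μ * (t - t0)))))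
    (m0' : ℝ)
    (hm0' : m0' = -km * m0 + ∑ ν, ae ν * e0 ν + ∑ μ, ai μ * i0 μ)
    [Nonempty N]
    (hei : ∀ (ν : N) (μ : M), ki μ ≤ ke ν)
    (hm0 : m0 < 1) (hm0neg : m0' ≤ 0)
    (t : ℝ) (ht : t0 ≤ t) :
    m t < 1 := by
  have hmt := hm t
  set Δ := t - t0 with hΔdef
  have hΔ : (0:ℝ) ≤ Δ := sub_nonneg.2 ht
  clear_value Δ
  set φ : ℝ → ℝ := phiAux km Δ with hφdef
  have hne : (Finset.univ : Finset N).Nonempty := Finset.univ_nonempty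
  set kmin := Finset.univ.inf' hne ke with hkmindef
  clear_value kmin
  obtain ⟨ν0, -, hν0⟩ := Finset.exists_mem_eq_inf' hne ke
  have hkminpos : 0 < kmin := by rw [hkmindef, hν0]; exact hke ν0
  have hφmin0 : 0 ≤ φ kmin := phiAux_nonneg _ _ _ hΔ
  set E := Real.exp (-km*Δ) with hEdef
  clear_value E
  have hEpos : 0 < E := hEdef ▸ Real.exp_pos _
  -- upper bound for km * φ kmin
  have hφ0 : φ 0 = (1 - E)/km := by
    rw [hEdef, hφdef, phiAux_eq km Δ 0 (ne_of_lt hkm)]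
    rw [show (-(0:ℝ)*Δ) = 0 by ring, Real.exp_zero]
    rw [div_eq_div_iff (by linarith) (ne_of_gt hkm)]
    ring
  have hφtop : km * φ kmin ≤ 1 - E := by
    have h1 : φ kmin ≤ φ 0 := phiAux_mono km Δ hΔ hkminpos.le
    rw [hφ0, le_div_iff₀ hkm] at h1
    linarith
  -- bounds on the three sums
  have hSe : ∑ ν, e0 ν * (ae ν / (ke ν - km)) * (E - Real.exp (-ke ν * Δ))
      ≤ φ kmin * ∑ ν, ae ν * e0 ν := by
    rw [Finset.mul_sum]
    refine Finset.sum_le_sum fun ν _ => ?_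
    have hp : e0 ν * (ae ν / (ke ν - km)) * (E - Real.exp (-ke ν * Δ))
        = e0 ν * ae ν * φ (ke ν) := by
      rw [hφdef, phiAux_eq km Δ (ke ν) (hkem ν), hEdef]; ring
    rw [hp]
    have h1 : φ (ke ν) ≤ φ kmin :=
      phiAux_mono km Δ hΔ (hkmindef ▸ Finset.inf'_le ke (Finset.mem_univ ν))
    nlinarith [mul_le_mul_of_nonneg_left h1 (mul_nonneg (he0 ν) (hae ν).le)]
  have hSi : ∑ μ, i0 μ * (ai μ / (ki μ - km)) * (E - Real.exp (-ki μ * Δ))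
      ≤ φ kmin * ∑ μ, ai μ * i0 μ := by
    rw [Finset.mul_sum]
    refine Finset.sum_le_sum fun μ _ => ?_
    have hp : i0 μ * (ai μ / (ki μ - km)) * (E - Real.exp (-ki μ * Δ))
        = i0 μ * ai μ * φ (ki μ) := by
      rw [hφdef, phiAux_eq km Δ (ki μ) (hkim μ), hEdef]; ring
    rw [hp]
    have h1 : φ kmin ≤ φ (ki μ) :=
      phiAux_mono km Δ hΔ (hkmindef ▸ Finset.le_inf' hne ke fun ν _ => hei ν μ)
    nlinarith [mul_le_mul_of_nonneg_left h1 (mul_nonneg (hai μ).le (neg_nonneg.2 (hi0 μ)))]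
  have hSj : ∑ μ, j0 μ * (ai μ / (ki μ - km)) * (aj μ / (kj μ - ki μ)) *
      ((E - Real.exp (-ki μ * Δ))
        - ((ki μ - km) / (kj μ - km)) * (E - Real.exp (-kj μ * Δ))) ≤ 0 := by
    refine Finset.sum_nonpos fun μ _ => ?_
    have hki_ne : ki μ - km ≠ 0 := sub_ne_zero.2 (hkim μ)
    have hkj_ne : kj μ - km ≠ 0 := sub_ne_zero.2 (hkjm μ)
    have e1 : E - Real.exp (-ki μ * Δ) = (ki μ - km) * φ (ki μ) := by
      rw [hφdef, phiAux_eq km Δ (ki μ) (hkim μ), hEdef]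
      field_simp
    have e2 : E - Real.exp (-kj μ * Δ) = (kj μ - km) * φ (kj μ) := by
      rw [hφdef, phiAux_eq km Δ (kj μ) (hkjm μ), hEdef]
      field_simp
    rw [e1, e2]
    have hji : 0 < kj μ - ki μ := sub_pos.2 (hkij μ)
    have key : j0 μ * (ai μ / (ki μ - km)) * (aj μ / (kj μ - ki μ)) *
        ((ki μ - km) * φ (ki μ)
          - ((ki μ - km) / (kj μ - km)) * ((kj μ - km) * φ (kj μ)))
        = j0 μ * ai μ * aj μ * ((φ (ki μ) - φ (kj μ)) / (kj μ - ki μ)) := by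
      field_simp
    rw [key]
    have hq : 0 ≤ (φ (ki μ) - φ (kj μ)) / (kj μ - ki μ) :=
      div_nonneg (sub_nonneg.2 (phiAux_mono km Δ hΔ (hkij μ).le)) hji.le
    have h5 : 0 ≤ ai μ * aj μ * ((φ (ki μ) - φ (kj μ)) / (kj μ - ki μ)) :=
      mul_nonneg (mul_nonneg (hai μ).le (haj μ).le) hq
    nlinarith [mul_nonneg (neg_nonneg.2 (hj0 μ)) h5]
  -- combine
  have hsum : ∑ ν, ae ν * e0 ν + ∑ μ, ai μ * i0 μ ≤ km * m0 := by
    rw [hm0'] at hm0neg; linarith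
  have hmid : φ kmin * (∑ ν, ae ν * e0 ν) + φ kmin * (∑ μ, ai μ * i0 μ)
      ≤ φ kmin * (km * m0) := by
    rw [← mul_add]
    exact mul_le_mul_of_nonneg_left hsum hφmin0
  have hfin : m t ≤ m0 * E + φ kmin * (km * m0) := by
    rw [hmt]; linarith [hSe, hSi, hSj, hmid]
  have hkey : m0 * E + φ kmin * (km * m0) < 1 := by
    nlinarith [mul_pos (show (0:ℝ) < E + km * φ kmin by nlinarith)
      (sub_pos.2 hm0), hφtop, hEpos, hφmin0]
  linarith
end

section
/- (Linear bound for nonnegative initial potential.) In the model setup, assume N is nonempty, k_e(ν) ≥ k_i(μ) for all ν ∈ N and μ ∈ M, m_0 ≥ 0, and m'_0 > 0. Then for every t ≥ t_0, writing Δ = t − t_0, the membrane potential stays below its linear extrapolation: m(t) ≤ m_0 + m'_0·Δ. -/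
open Real

lemma phi_mono {x y : ℝ} (hx : x ≠ 0) (hy : y ≠ 0) (hxy : x ≤ y) :
    (Real.exp x - 1) / x ≤ (Real.exp y - 1) / y := by
  have h := convexOn_exp.secant_mono (a := 0) (x := x) (y := y)
    (Set.mem_univ _) (Set.mem_univ _) (Set.mem_univ _) hx hy hxy
  simpa using h

lemma kernel_id (km : ℝ) {Δ c : ℝ} (hc : c ≠ km) (hΔ : Δ ≠ 0) :
    (Real.exp (-km*Δ) - Real.exp (-c*Δ))/(c - km)
      = Δ * Real.exp (-km*Δ) * ((Real.exp ((km - c)*Δ) - 1)/((km - c)*Δ)) := by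
  have h1 : (-c*Δ) = (-km*Δ) + (km - c)*Δ := by ring
  have h2 : c - km ≠ 0 := sub_ne_zero.2 hc
  have h3 : km - c ≠ 0 := sub_ne_zero.2 (Ne.symm hc)
  rw [h1, Real.exp_add]
  field_simp
  ring

lemma kernel_mono (km : ℝ) {Δ a b : ℝ} (hΔ : 0 ≤ Δ) (ha : a ≠ km) (hb : b ≠ km)
    (hab : a ≤ b) :
    (Real.exp (-km*Δ) - Real.exp (-b*Δ))/(b - km)
      ≤ (Real.exp (-km*Δ) - Real.exp (-a*Δ))/(a - km) := by
  rcases eq_or_lt_of_le hΔ with h | h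
  · simp [← h]
  · rw [kernel_id km ha h.ne', kernel_id km hb h.ne']
    have hx : (km - b)*Δ ≠ 0 := mul_ne_zero (sub_ne_zero.2 (Ne.symm hb)) h.ne'
    have hy : (km - a)*Δ ≠ 0 := mul_ne_zero (sub_ne_zero.2 (Ne.symm ha)) h.ne'
    have hxy : (km - b)*Δ ≤ (km - a)*Δ := by nlinarith
    exact mul_le_mul_of_nonneg_left (phi_mono hx hy hxy) (by positivity)

/-- Linear bound for nonnegative initial potential: In the model setup,
if N is nonempty, every excitatory current decays at least as fast as every inhibitory
current, m₀ ≥ 0 and m'₀ > 0, then m(t) ≤ m₀ + m'₀·(t - t₀) for every t ≥ t₀. -/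
theorem stmt_15
    (t0 m0 km : ℝ) (hkm : 0 < km)
    {N M : Type} [Fintype N] [Fintype M]
    (ke ae e0 : N → ℝ)
    (ki kj ai aj i0 j0 : M → ℝ)
    (hke : ∀ ν, 0 < ke ν) (hkem : ∀ ν, ke ν ≠ km)
    (hae : ∀ ν, 0 < ae ν) (he0 : ∀ ν, 0 ≤ e0 ν)
    (hki : ∀ μ, 0 < ki μ) (hkij : ∀ μ, ki μ < kj μ)
    (hkim : ∀ μ, ki μ ≠ km) (hkjm : ∀ μ, kj μ ≠ km)
    (hai : ∀ μ, 0 < ai μ) (haj : ∀ μ, 0 < aj μ)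
    (hi0 : ∀ μ, i0 μ ≤ 0) (hj0 : ∀ μ, j0 μ ≤ 0)
    (m : ℝ → ℝ)
    (hm : ∀ t : ℝ, m t =
      m0 * Real.exp (-km * (t - t0))
      + ∑ ν, e0 ν * (ae ν / (ke ν - km)) *
          (Real.exp (-km * (t - t0)) - Real.exp (-ke ν * (t - t0)))
      + ∑ μ, i0 μ * (ai μ / (ki μ - km)) *
          (Real.exp (-km * (t - t0)) - Real.exp (-ki μ * (t - t0)))
      + ∑ μ, j0 μ * (ai μ / (ki μ - km)) * (aj μ / (kj μ - ki μ)) *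
          ((Real.exp (-km * (t - t0)) - Real.exp (-ki μ * (t - t0)))
            - ((ki μ - km) / (kj μ - km)) *
              (Real.exp (-km * (t - t0)) - Real.exp (-kj μ * (t - t0)))))
    (m0' : ℝ)
    (hm0' : m0' = -km * m0 + ∑ ν, ae ν * e0 ν + ∑ μ, ai μ * i0 μ)
    [Nonempty N]
    (hei : ∀ (ν : N) (μ : M), ki μ ≤ ke ν)
    (hm0 : 0 ≤ m0) (hm0pos : 0 < m0')
    (t : ℝ) (ht : t0 ≤ t) :
    m t ≤ m0 + m0' * (t - t0) := by
  set Δ := t - t0 with hΔdef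
  have hΔ : 0 ≤ Δ := sub_nonneg.2 ht
  obtain ⟨ν0, -, hν0⟩ := Finset.exists_min_image (Finset.univ : Finset N) ke
    ⟨Classical.arbitrary N, Finset.mem_univ _⟩
  set E : ℝ := Real.exp (-km * Δ) with hE
  set K : ℝ := (E - Real.exp (-ke ν0 * Δ))/(ke ν0 - km) with hK
  -- bound on the excitatory sum
  have hsum1 : ∑ ν, e0 ν * (ae ν / (ke ν - km)) * (E - Real.exp (-ke ν * Δ))
      ≤ (∑ ν, ae ν * e0 ν) * K := by
    rw [Finset.sum_mul]
    apply Finset.sum_le_sum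
    intro ν _
    have h1 : e0 ν * (ae ν / (ke ν - km)) * (E - Real.exp (-ke ν * Δ))
        = (ae ν * e0 ν) * ((E - Real.exp (-ke ν * Δ))/(ke ν - km)) := by ring
    rw [h1, hK, hE]
    exact mul_le_mul_of_nonneg_left
      (kernel_mono km hΔ (hkem ν0) (hkem ν) (hν0 ν (Finset.mem_univ _)))
      (mul_nonneg (hae ν).le (he0 ν))
  -- bound on the simple inhibitory sum
  have hsum2 : ∑ μ, i0 μ * (ai μ / (ki μ - km)) * (E - Real.exp (-ki μ * Δ))
      ≤ (∑ μ, ai μ * i0 μ) * K := by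
    rw [Finset.sum_mul]
    apply Finset.sum_le_sum
    intro μ _
    have h1 : i0 μ * (ai μ / (ki μ - km)) * (E - Real.exp (-ki μ * Δ))
        = (ai μ * i0 μ) * ((E - Real.exp (-ki μ * Δ))/(ki μ - km)) := by ring
    rw [h1, hK, hE]
    exact mul_le_mul_of_nonpos_left
      (kernel_mono km hΔ (hkim μ) (hkem ν0) (hei ν0 μ))
      (mul_nonpos_of_nonneg_of_nonpos (hai μ).le (hi0 μ))
  -- the double-decay inhibitory sum is nonpositive
  have hsum3 : ∑ μ, j0 μ * (ai μ / (ki μ - km)) * (aj μ / (kj μ - ki μ)) *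
      ((E - Real.exp (-ki μ * Δ))
        - ((ki μ - km) / (kj μ - km)) * (E - Real.exp (-kj μ * Δ))) ≤ 0 := by
    apply Finset.sum_nonpos
    intro μ _
    have h2 : ki μ - km ≠ 0 := sub_ne_zero.2 (hkim μ)
    have h3 : kj μ - km ≠ 0 := sub_ne_zero.2 (hkjm μ)
    have h4 : (0:ℝ) < kj μ - ki μ := sub_pos.2 (hkij μ)
    have hid : j0 μ * (ai μ / (ki μ - km)) * (aj μ / (kj μ - ki μ)) *
        ((E - Real.exp (-ki μ * Δ))
          - ((ki μ - km) / (kj μ - km)) * (E - Real.exp (-kj μ * Δ)))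
        = (j0 μ * (ai μ * aj μ / (kj μ - ki μ))) *
          ((E - Real.exp (-ki μ * Δ))/(ki μ - km)
            - (E - Real.exp (-kj μ * Δ))/(kj μ - km)) := by
      field_simp
    rw [hid]
    apply mul_nonpos_of_nonpos_of_nonneg
    · exact mul_nonpos_of_nonpos_of_nonneg (hj0 μ) (div_nonneg (mul_nonneg (hai μ).le (haj μ).le) h4.le)
    · rw [sub_nonneg, hE]
      exact kernel_mono km hΔ (hkim μ) (hkjm μ) (hkij μ).le
  -- K ≤ (1 - E)/km
  have hK0 : K ≤ (1 - E)/km := by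
    have h := kernel_mono km hΔ (show (0:ℝ) ≠ km from hkm.ne) (hkem ν0) (hke ν0).le
    rw [show (-(0:ℝ)*Δ) = 0 by ring, Real.exp_zero, zero_sub, div_neg, ← neg_div,
      neg_sub] at h
    rw [hK, hE]
    exact h
  have hkK : km * K ≤ 1 - E := by
    have := (le_div_iff₀ hkm).1 hK0
    linarith
  have hE1 : 1 - E ≤ km * Δ := by
    have h := Real.add_one_le_exp (-(km * Δ))
    rw [hE, show (-km*Δ) = -(km*Δ) by ring]
    linarith
  have hKΔ : K ≤ Δ := by nlinarith
  -- assemble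
  rw [hm t]
  have hstep : m0 * E
      + ∑ ν, e0 ν * (ae ν / (ke ν - km)) * (E - Real.exp (-ke ν * Δ))
      + ∑ μ, i0 μ * (ai μ / (ki μ - km)) * (E - Real.exp (-ki μ * Δ))
      + ∑ μ, j0 μ * (ai μ / (ki μ - km)) * (aj μ / (kj μ - ki μ)) *
          ((E - Real.exp (-ki μ * Δ))
            - ((ki μ - km) / (kj μ - km)) * (E - Real.exp (-kj μ * Δ)))
      ≤ m0 * E + (∑ ν, ae ν * e0 ν) * K + (∑ μ, ai μ * i0 μ) * K + 0 := by
    exact add_le_add (add_le_add (add_le_add le_rfl hsum1) hsum2) hsum3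
  refine hstep.trans ?_
  have hc : (∑ ν, ae ν * e0 ν) + (∑ μ, ai μ * i0 μ) = m0' + km * m0 := by
    rw [hm0']; ring
  have hABK : (∑ ν, ae ν * e0 ν) * K + (∑ μ, ai μ * i0 μ) * K
      = m0' * K + m0 * (km * K) := by linear_combination K * hc
  have h4 : m0' * K ≤ m0' * Δ := mul_le_mul_of_nonneg_left hKΔ hm0pos.le
  have h5 : m0 * (km * K) ≤ m0 * (1 - E) := mul_le_mul_of_nonneg_left hkK hm0
  linarith
end

section
/- (Newton iteration underestimates threshold passage time.) In the model setup, assume N is nonempty, k_e(ν) ≥ k_i(μ) for all ν ∈ N and μ ∈ M, m_0 < 1, and m'_0 > 0. Let t_e = t_0 + (1 − m_0)/m'_0 be the Newton estimate of the threshold passage time. Then the membrane potential stays below threshold up to the estimate: m(t) < 1 for every t with t_0 ≤ t < t_e. -/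
open Real

lemma aux_eval (c Δ : ℝ) (hc : c ≠ 0) :
    (∫ s in (0:ℝ)..Δ, Real.exp (c * s)) = (Real.exp (c * Δ) - 1) / c := by
  rw [intervalIntegral.integral_comp_mul_left (fun x => Real.exp x) hc,
    integral_exp]
  simp [smul_eq_mul, div_eq_inv_mul]

lemma aux_nonneg (c Δ : ℝ) (hΔ : 0 ≤ Δ) :
    0 ≤ ∫ s in (0:ℝ)..Δ, Real.exp (c * s) :=
  intervalIntegral.integral_nonneg hΔ (fun x _ => (Real.exp_pos _).le)

lemma aux_mono {c d : ℝ} (Δ : ℝ) (hΔ : 0 ≤ Δ) (h : c ≤ d) :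
    (∫ s in (0:ℝ)..Δ, Real.exp (c * s)) ≤ ∫ s in (0:ℝ)..Δ, Real.exp (d * s) := by
  apply intervalIntegral.integral_mono_on hΔ
    ((Real.continuous_exp.comp (continuous_const.mul continuous_id)).intervalIntegrable 0 Δ)
    ((Real.continuous_exp.comp (continuous_const.mul continuous_id)).intervalIntegrable 0 Δ)
  intro x hx
  exact Real.exp_le_exp.2 (mul_le_mul_of_nonneg_right h hx.1)

set_option maxHeartbeats 1000000 in
/-- Newton iteration underestimates threshold passage time: In the model
setup, if N is nonempty, every excitatory current decays at least as fast as every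
inhibitory current, m₀ < 1 and m'₀ > 0, then with the Newton estimate
t_e = t₀ + (1 - m₀)/m'₀, the membrane potential stays below threshold up to the
estimate: m(t) < 1 for every t with t₀ ≤ t < t_e. -/
theorem stmt_17
    (t0 m0 km : ℝ) (hkm : 0 < km)
    {N M : Type} [Fintype N] [Fintype M]
    (ke ae e0 : N → ℝ)
    (ki kj ai aj i0 j0 : M → ℝ)
    (hke : ∀ ν, 0 < ke ν) (hkem : ∀ ν, ke ν ≠ km)
    (hae : ∀ ν, 0 < ae ν) (he0 : ∀ ν, 0 ≤ e0 ν)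
    (hki : ∀ μ, 0 < ki μ) (hkij : ∀ μ, ki μ < kj μ)
    (hkim : ∀ μ, ki μ ≠ km) (hkjm : ∀ μ, kj μ ≠ km)
    (hai : ∀ μ, 0 < ai μ) (haj : ∀ μ, 0 < aj μ)
    (hi0 : ∀ μ, i0 μ ≤ 0) (hj0 : ∀ μ, j0 μ ≤ 0)
    (m : ℝ → ℝ)
    (hm : ∀ t : ℝ, m t =
      m0 * Real.exp (-km * (t - t0))
      + ∑ ν, e0 ν * (ae ν / (ke ν - km)) *
          (Real.exp (-km * (t - t0)) - Real.exp (-ke ν * (t - t0)))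
      + ∑ μ, i0 μ * (ai μ / (ki μ - km)) *
          (Real.exp (-km * (t - t0)) - Real.exp (-ki μ * (t - t0)))
      + ∑ μ, j0 μ * (ai μ / (ki μ - km)) * (aj μ / (kj μ - ki μ)) *
          ((Real.exp (-km * (t - t0)) - Real.exp (-ki μ * (t - t0)))
            - ((ki μ - km) / (kj μ - km)) *
              (Real.exp (-km * (t - t0)) - Real.exp (-kj μ * (t - t0)))))
    (m0' : ℝ)
    (hm0' : m0' = -km * m0 + ∑ ν, ae ν * e0 ν + ∑ μ, ai μ * i0 μ)
    [Nonempty N]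
    (hei : ∀ (ν : N) (μ : M), ki μ ≤ ke ν)
    (hm0 : m0 < 1) (hm0pos : 0 < m0')
    (te : ℝ) (hte : te = t0 + (1 - m0) / m0')
    (t : ℝ) (ht0 : t0 ≤ t) (hts : t < te) :
    m t < 1 := by
  rcases ht0.eq_or_lt with h0 | hΔpos
  · -- t = t0 : m t0 = m0 < 1
    subst h0
    rw [hm]
    simp [hm0]
  -- main case: Δ := t - t0 > 0
  have hmt := hm t
  set Δ : ℝ := t - t0 with hΔdef
  have hΔ : 0 < Δ := by simp [hΔdef]; linarith
  set g : ℝ → ℝ := fun k => ∫ s in (0:ℝ)..Δ, Real.exp ((km - k) * s) with hgdef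
  have hgval : ∀ k : ℝ, k ≠ km → g k = (Real.exp ((km - k) * Δ) - 1) / (km - k) := by
    intro k hk
    exact aux_eval _ _ (sub_ne_zero.2 (Ne.symm hk))
  have hkey : ∀ k : ℝ, k ≠ km →
      Real.exp (-km * Δ) - Real.exp (-k * Δ) =
        Real.exp (-km * Δ) * ((k - km) * g k) := by
    intro k hk
    have e1 : Real.exp (-k * Δ) = Real.exp (-km * Δ) * Real.exp ((km - k) * Δ) := by
      rw [← Real.exp_add]; ring_nf
    have h1 : km - k ≠ 0 := sub_ne_zero.2 (Ne.symm hk)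
    rw [hgval k hk, e1]
    field_simp
    ring
  -- rewrite m t
  have hmt2 : m t = Real.exp (-km * Δ) *
      (m0 + (∑ ν, ae ν * e0 ν * g (ke ν)) + (∑ μ, ai μ * i0 μ * g (ki μ))
        + (∑ μ, j0 μ * ai μ * aj μ * ((g (ki μ) - g (kj μ)) / (kj μ - ki μ)))) := by
    rw [hmt]
    have hse : ∀ ν : N, e0 ν * (ae ν / (ke ν - km)) *
        (Real.exp (-km * Δ) - Real.exp (-ke ν * Δ)) =
        Real.exp (-km * Δ) * (ae ν * e0 ν * g (ke ν)) := by
      intro ν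
      rw [hkey _ (hkem ν)]
      have h1 : ke ν - km ≠ 0 := sub_ne_zero.2 (hkem ν)
      field_simp
    have hsi : ∀ μ : M, i0 μ * (ai μ / (ki μ - km)) *
        (Real.exp (-km * Δ) - Real.exp (-ki μ * Δ)) =
        Real.exp (-km * Δ) * (ai μ * i0 μ * g (ki μ)) := by
      intro μ
      rw [hkey _ (hkim μ)]
      have h1 : ki μ - km ≠ 0 := sub_ne_zero.2 (hkim μ)
      field_simp
    have hsj : ∀ μ : M, j0 μ * (ai μ / (ki μ - km)) * (aj μ / (kj μ - ki μ)) *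
        ((Real.exp (-km * Δ) - Real.exp (-ki μ * Δ))
          - ((ki μ - km) / (kj μ - km)) *
            (Real.exp (-km * Δ) - Real.exp (-kj μ * Δ))) =
        Real.exp (-km * Δ) *
          (j0 μ * ai μ * aj μ * ((g (ki μ) - g (kj μ)) / (kj μ - ki μ))) := by
      intro μ
      rw [hkey _ (hkim μ), hkey _ (hkjm μ)]
      have h1 : ki μ - km ≠ 0 := sub_ne_zero.2 (hkim μ)
      have h2 : kj μ - km ≠ 0 := sub_ne_zero.2 (hkjm μ)
      have h3 : kj μ - ki μ ≠ 0 := sub_ne_zero.2 (ne_of_gt (hkij μ))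
      field_simp
    rw [Finset.sum_congr rfl (fun ν _ => hse ν),
      Finset.sum_congr rfl (fun μ _ => hsi μ),
      Finset.sum_congr rfl (fun μ _ => hsj μ),
      ← Finset.mul_sum, ← Finset.mul_sum, ← Finset.mul_sum]
    ring
  -- the maximal excitatory kernel value
  obtain ⟨ν₀, hν₀⟩ := Finite.exists_max (fun ν : N => g (ke ν))
  set G : ℝ := g (ke ν₀) with hGdef
  have hGnn : 0 ≤ G := aux_nonneg _ _ hΔ.le
  have hG0 : G ≤ (Real.exp (km * Δ) - 1) / km := by
    calc G ≤ ∫ s in (0:ℝ)..Δ, Real.exp (km * s) := by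
          exact aux_mono Δ hΔ.le (by linarith [hke ν₀])
      _ = (Real.exp (km * Δ) - 1) / km := aux_eval km Δ (ne_of_gt hkm)
  have hkG : km * G ≤ Real.exp (km * Δ) - 1 := by
    rw [div_eq_inv_mul] at hG0
    calc km * G ≤ km * ((km)⁻¹ * (Real.exp (km * Δ) - 1)) :=
          mul_le_mul_of_nonneg_left hG0 hkm.le
      _ = Real.exp (km * Δ) - 1 := by field_simp
  have hGi : ∀ μ, G ≤ g (ki μ) := by
    intro μ
    exact aux_mono Δ hΔ.le (by linarith [hei ν₀ μ])
  -- sum bounds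
  have hS1 : (∑ ν, ae ν * e0 ν * g (ke ν)) ≤ (∑ ν, ae ν * e0 ν) * G := by
    rw [Finset.sum_mul]
    apply Finset.sum_le_sum
    intro ν _
    exact mul_le_mul_of_nonneg_left (hν₀ ν) (mul_nonneg (hae ν).le (he0 ν))
  have hS2 : (∑ μ, ai μ * i0 μ * g (ki μ)) ≤ (∑ μ, ai μ * i0 μ) * G := by
    rw [Finset.sum_mul]
    apply Finset.sum_le_sum
    intro μ _
    have hle : ai μ * i0 μ ≤ 0 := mul_nonpos_of_nonneg_of_nonpos (hai μ).le (hi0 μ)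
    exact mul_le_mul_of_nonpos_left (hGi μ) hle
  have hS3 : (∑ μ, j0 μ * ai μ * aj μ * ((g (ki μ) - g (kj μ)) / (kj μ - ki μ))) ≤ 0 := by
    apply Finset.sum_nonpos
    intro μ _
    have hgg : g (kj μ) ≤ g (ki μ) := aux_mono Δ hΔ.le (by linarith [hkij μ])
    have h1 : 0 ≤ (g (ki μ) - g (kj μ)) / (kj μ - ki μ) :=
      div_nonneg (by linarith) (by linarith [hkij μ])
    have h2 : j0 μ * ai μ * aj μ ≤ 0 :=
      mul_nonpos_of_nonpos_of_nonneg
        (mul_nonpos_of_nonpos_of_nonneg (hj0 μ) (hai μ).le) (haj μ).le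
    exact mul_nonpos_of_nonpos_of_nonneg h2 h1
  -- constraint from the Newton estimate
  have hΔlt : m0' * Δ < 1 - m0 := by
    have h1 : Δ < (1 - m0) / m0' := by rw [hte] at hts; simp [hΔdef]; linarith
    have := (lt_div_iff₀ hm0pos).1 h1
    linarith
  have hPI : ((∑ ν, ae ν * e0 ν) + (∑ μ, ai μ * i0 μ)) * Δ
      < (1 - m0) + km * m0 * Δ := by
    have h2 : ((∑ ν, ae ν * e0 ν) + (∑ μ, ai μ * i0 μ)) * Δ = m0' * Δ + km * m0 * Δ := by
      rw [hm0']; ring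
    linarith
  -- scalar exponential facts
  have hlt1 : -(km * Δ) + 1 < (Real.exp (km * Δ))⁻¹ := by
    rw [← Real.exp_neg]
    exact Real.add_one_lt_exp (by nlinarith)
  have h3 : Real.exp (km * Δ) * (-(km * Δ) + 1) < 1 := by
    have h := mul_lt_mul_of_pos_left hlt1 (Real.exp_pos (km * Δ))
    rwa [mul_inv_cancel₀ (Real.exp_pos (km * Δ)).ne'] at h
  have hGE' : G < Δ * Real.exp (km * Δ) := by
    have h5 : km * G < km * (Δ * Real.exp (km * Δ)) := by linarith only [hkG, h3]
    exact lt_of_mul_lt_mul_left h5 hkm.le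
  -- final scalar inequality
  have hfin : m0 * Δ + ((1 - m0) + km * m0 * Δ) * G < Real.exp (km * Δ) * Δ := by
    rcases le_or_gt 0 m0 with hm0s | hm0s
    · have f1 : (1 - m0) * G < (1 - m0) * (Δ * Real.exp (km * Δ)) :=
        mul_lt_mul_of_pos_left hGE' (by linarith)
      have f2 : m0 * Δ * (1 + km * G) ≤ m0 * Δ * Real.exp (km * Δ) :=
        mul_le_mul_of_nonneg_left (by linarith) (mul_nonneg hm0s hΔ.le)
      linarith only [f1, f2]
    · have hclaim : G * (1 - km * Δ) ≤ Δ := by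
        rcases le_or_gt (1 - km * Δ) 0 with h | h
        · exact le_trans (mul_nonpos_of_nonneg_of_nonpos hGnn h) hΔ.le
        · have f1 : km * G * (1 - km * Δ) ≤ (Real.exp (km * Δ) - 1) * (1 - km * Δ) :=
            mul_le_mul_of_nonneg_right hkG h.le
          have f2 : (Real.exp (km * Δ) - 1) * (1 - km * Δ) ≤ km * Δ := by nlinarith only [h3]
          have f3 : km * (G * (1 - km * Δ)) ≤ km * Δ := by linarith only [f1, f2]
          exact le_of_mul_le_mul_left f3 hkm
      have h4 : m0 * (Δ + km * Δ * G - G) ≤ 0 :=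
        mul_nonpos_of_nonpos_of_nonneg hm0s.le (by linarith only [hclaim])
      linarith only [h4, hGE']
  -- assemble
  have hX : m0 + (∑ ν, ae ν * e0 ν * g (ke ν)) + (∑ μ, ai μ * i0 μ * g (ki μ))
      + (∑ μ, j0 μ * ai μ * aj μ * ((g (ki μ) - g (kj μ)) / (kj μ - ki μ)))
      < Real.exp (km * Δ) := by
    have hmul : (((∑ ν, ae ν * e0 ν) + (∑ μ, ai μ * i0 μ)) * Δ) * G
        ≤ ((1 - m0) + km * m0 * Δ) * G :=
      mul_le_mul_of_nonneg_right hPI.le hGnn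
    have hXΔ : (m0 + (∑ ν, ae ν * e0 ν) * G + (∑ μ, ai μ * i0 μ) * G) * Δ
        < Real.exp (km * Δ) * Δ := by linarith only [hmul, hfin]
    have hXle : m0 + (∑ ν, ae ν * e0 ν) * G + (∑ μ, ai μ * i0 μ) * G
        < Real.exp (km * Δ) := lt_of_mul_lt_mul_right hXΔ hΔ.le
    linarith only [hS1, hS2, hS3, hXle]
  rw [hmt2]
  have hE : Real.exp (-km * Δ) * Real.exp (km * Δ) = 1 := by
    rw [← Real.exp_add]; norm_num
  calc Real.exp (-km * Δ) *
      (m0 + (∑ ν, ae ν * e0 ν * g (ke ν)) + (∑ μ, ai μ * i0 μ * g (ki μ))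
        + (∑ μ, j0 μ * ai μ * aj μ * ((g (ki μ) - g (kj μ)) / (kj μ - ki μ))))
      < Real.exp (-km * Δ) * Real.exp (km * Δ) :=
        mul_lt_mul_of_pos_left hX (Real.exp_pos _)
    _ = 1 := hE
end

section
/- (Exact solution of the membrane potential equation.) In the model setup, define for each ν ∈ N the excitatory current e_ν(t) = e_0(ν)·exp(−k_e(ν)(t − t_0)), and for each μ ∈ M the inhibitory current i_μ(t) = i_0(μ)·exp(−k_i(μ)(t − t_0)) + j_0(μ)·b_j(μ)·(exp(−k_i(μ)(t − t_0)) − exp(−k_j(μ)(t − t_0))). Then m(t_0) = m_0, and for every real t ≥ t_0 the function m is differentiable at t with m'(t) = −k_m·m(t) + Σ_{ν∈N} a_e(ν)·e_ν(t) + Σ_{μ∈M} a_i(μ)·i_μ(t). -/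
/-!
Every term of `m` is a multiple of `exp (-km Δ)` or of a difference
`exp (-km Δ) - exp (-k Δ)` scaled by `1 / (k - km)`, and such a difference solves
`y' = -km y + exp (-k Δ)` with `y(t₀) = 0`. The doubly exponential inhibitory term splits,
after cancelling `ki - km`, into two such responses, whose forcings combine to the
difference of exponentials in `i_μ`. Summing, the linear equation holds term by term.
-/

open Real

lemma hasDerivAt_exp_decay (k t0 t : ℝ) :
    HasDerivAt (fun t => exp (-k * (t - t0))) (-k * exp (-k * (t - t0))) t := by
  simpa [mul_comm] using (((hasDerivAt_id t).sub_const t0).const_mul (-k)).exp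

lemma hasDerivAt_const_mul_exp_decay (c k t0 t : ℝ) :
    HasDerivAt (fun t => c * exp (-k * (t - t0))) (-k * (c * exp (-k * (t - t0)))) t :=
  ((hasDerivAt_exp_decay k t0 t).const_mul c).congr_deriv (by ring)

lemma hasDerivAt_response_exp_decay {k km : ℝ} (hk : k ≠ km) (a c t0 t : ℝ) :
    HasDerivAt (fun t => c * (a / (k - km)) * (exp (-km * (t - t0)) - exp (-k * (t - t0))))
      (-km * (c * (a / (k - km)) * (exp (-km * (t - t0)) - exp (-k * (t - t0))))
        + a * (c * exp (-k * (t - t0)))) t := by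
  refine (((hasDerivAt_exp_decay km t0 t).sub (hasDerivAt_exp_decay k t0 t)).const_mul
    (c * (a / (k - km)))).congr_deriv ?_
  field_simp [sub_ne_zero.mpr hk]
  ring

lemma response_biexp_eq {ki kj km : ℝ} (hki : ki ≠ km) (a b c t0 t : ℝ) :
    c * (a / (ki - km)) * b *
        ((exp (-km * (t - t0)) - exp (-ki * (t - t0)))
          - ((ki - km) / (kj - km)) * (exp (-km * (t - t0)) - exp (-kj * (t - t0)))) =
      c * b * (a / (ki - km)) * (exp (-km * (t - t0)) - exp (-ki * (t - t0)))
        - c * b * (a / (kj - km)) * (exp (-km * (t - t0)) - exp (-kj * (t - t0))) := by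
  field_simp [sub_ne_zero.mpr hki]

lemma hasDerivAt_response_biexp {ki kj km : ℝ} (hki : ki ≠ km) (hkj : kj ≠ km)
    (a b c t0 t : ℝ) :
    HasDerivAt (fun t => c * (a / (ki - km)) * b *
        ((exp (-km * (t - t0)) - exp (-ki * (t - t0)))
          - ((ki - km) / (kj - km)) * (exp (-km * (t - t0)) - exp (-kj * (t - t0)))))
      (-km * (c * (a / (ki - km)) * b *
        ((exp (-km * (t - t0)) - exp (-ki * (t - t0)))
          - ((ki - km) / (kj - km)) * (exp (-km * (t - t0)) - exp (-kj * (t - t0)))))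
        + a * (c * b * (exp (-ki * (t - t0)) - exp (-kj * (t - t0))))) t := by
  simp_rw [response_biexp_eq hki a b c t0]
  exact ((hasDerivAt_response_exp_decay hki a (c * b) t0 t).sub
    (hasDerivAt_response_exp_decay hkj a (c * b) t0 t)).congr_deriv (by ring)

lemma HasDerivAt.sum_linear_forced {ι : Type*} (s : Finset ι) {k t : ℝ}
    {f : ι → ℝ → ℝ} {g : ι → ℝ} (hf : ∀ i ∈ s, HasDerivAt (f i) (-k * f i t + g i) t) :
    HasDerivAt (fun t => ∑ i ∈ s, f i t) (-k * ∑ i ∈ s, f i t + ∑ i ∈ s, g i) t := by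
  simpa only [Finset.mul_sum, Finset.sum_add_distrib] using HasDerivAt.fun_sum hf

theorem stmt_19_general
    (t0 m0 km : ℝ)
    {N M : Type} [Fintype N] [Fintype M]
    (ke ae e0 : N → ℝ)
    (ki kj ai aj i0 j0 : M → ℝ)
    (hkem : ∀ ν, ke ν ≠ km)
    (hkim : ∀ μ, ki μ ≠ km) (hkjm : ∀ μ, kj μ ≠ km)
    (m : ℝ → ℝ)
    (hm : ∀ t : ℝ, m t =
      m0 * Real.exp (-km * (t - t0))
      + ∑ ν, e0 ν * (ae ν / (ke ν - km)) *
          (Real.exp (-km * (t - t0)) - Real.exp (-ke ν * (t - t0)))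
      + ∑ μ, i0 μ * (ai μ / (ki μ - km)) *
          (Real.exp (-km * (t - t0)) - Real.exp (-ki μ * (t - t0)))
      + ∑ μ, j0 μ * (ai μ / (ki μ - km)) * (aj μ / (kj μ - ki μ)) *
          ((Real.exp (-km * (t - t0)) - Real.exp (-ki μ * (t - t0)))
            - ((ki μ - km) / (kj μ - km)) *
              (Real.exp (-km * (t - t0)) - Real.exp (-kj μ * (t - t0)))))
    :
    m t0 = m0 ∧
    ∀ t : ℝ, t0 ≤ t →
      HasDerivAt m
        (-km * m t
          + ∑ ν, ae ν * (e0 ν * Real.exp (-ke ν * (t - t0)))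
          + ∑ μ, ai μ *
              (i0 μ * Real.exp (-ki μ * (t - t0)) +
                j0 μ * (aj μ / (kj μ - ki μ)) *
                  (Real.exp (-ki μ * (t - t0)) - Real.exp (-kj μ * (t - t0))))) t := by
  refine ⟨by simp [hm t0], fun t _ => ?_⟩
  have hexc := HasDerivAt.sum_linear_forced Finset.univ fun ν _ =>
    hasDerivAt_response_exp_decay (hkem ν) (ae ν) (e0 ν) t0 t
  have hinh := HasDerivAt.sum_linear_forced Finset.univ fun μ _ =>
    hasDerivAt_response_exp_decay (hkim μ) (ai μ) (i0 μ) t0 t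
  have hinh₂ := HasDerivAt.sum_linear_forced Finset.univ fun μ _ =>
    hasDerivAt_response_biexp (hkim μ) (hkjm μ) (ai μ) (aj μ / (kj μ - ki μ)) (j0 μ) t0 t
  rw [funext hm]
  beta_reduce
  refine ((((hasDerivAt_const_mul_exp_decay m0 km t0 t).add hexc).add hinh).add
    hinh₂).congr_deriv ?_
  simp only [Finset.sum_add_distrib, mul_add]
  ring

/-- Exact solution of the membrane potential equation: In the model
setup, with excitatory currents e_ν(t) = e₀(ν)·exp(-k_e(ν)(t-t₀)) and inhibitory
currents i_μ(t) = i₀(μ)·exp(-k_i(μ)(t-t₀)) + j₀(μ)·b_j(μ)·(exp(-k_i(μ)(t-t₀)) -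
exp(-k_j(μ)(t-t₀))), one has m(t₀) = m₀ and, for every real t ≥ t₀, m is differentiable
at t with m'(t) = -k_m·m(t) + Σ_ν a_e(ν)·e_ν(t) + Σ_μ a_i(μ)·i_μ(t). -/
theorem stmt_19
    (t0 m0 km : ℝ) (hkm : 0 < km)
    {N M : Type} [Fintype N] [Fintype M]
    (ke ae e0 : N → ℝ)
    (ki kj ai aj i0 j0 : M → ℝ)
    (hke : ∀ ν, 0 < ke ν) (hkem : ∀ ν, ke ν ≠ km)
    (hae : ∀ ν, 0 < ae ν) (he0 : ∀ ν, 0 ≤ e0 ν)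
    (hki : ∀ μ, 0 < ki μ) (hkij : ∀ μ, ki μ < kj μ)
    (hkim : ∀ μ, ki μ ≠ km) (hkjm : ∀ μ, kj μ ≠ km)
    (hai : ∀ μ, 0 < ai μ) (haj : ∀ μ, 0 < aj μ)
    (hi0 : ∀ μ, i0 μ ≤ 0) (hj0 : ∀ μ, j0 μ ≤ 0)
    (m : ℝ → ℝ)
    (hm : ∀ t : ℝ, m t =
      m0 * Real.exp (-km * (t - t0))
      + ∑ ν, e0 ν * (ae ν / (ke ν - km)) *
          (Real.exp (-km * (t - t0)) - Real.exp (-ke ν * (t - t0)))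
      + ∑ μ, i0 μ * (ai μ / (ki μ - km)) *
          (Real.exp (-km * (t - t0)) - Real.exp (-ki μ * (t - t0)))
      + ∑ μ, j0 μ * (ai μ / (ki μ - km)) * (aj μ / (kj μ - ki μ)) *
          ((Real.exp (-km * (t - t0)) - Real.exp (-ki μ * (t - t0)))
            - ((ki μ - km) / (kj μ - km)) *
              (Real.exp (-km * (t - t0)) - Real.exp (-kj μ * (t - t0)))))
    :
    m t0 = m0 ∧
    ∀ t : ℝ, t0 ≤ t →
      HasDerivAt m
        (-km * m t
          + ∑ ν, ae ν * (e0 ν * Real.exp (-ke ν * (t - t0)))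
          + ∑ μ, ai μ *
              (i0 μ * Real.exp (-ki μ * (t - t0)) +
                j0 μ * (aj μ / (kj μ - ki μ)) *
                  (Real.exp (-ki μ * (t - t0)) - Real.exp (-kj μ * (t - t0))))) t :=
  stmt_19_general t0 m0 km ke ae e0 ki kj ai aj i0 j0 hkem hkim hkjm m hm
end
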